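/- arXiv:1703.03321 — 3 statements merged into one kernel-verified Lean document; each statement's English description precedes it below -/
import Mathlib

section
/- Let k ≥ 2 and let A = diag(κ₁,…,κₙ) be a diagonal n×n real matrix. Then for every n×n real matrix η, the second Fréchet derivative of P_k(A) = trace(A^k) satisfies d²P_k(A)(η,η) = k(k−1) · Σ_{i=1}^n κᵢ^{k−2} (η_{ii})² + k · Σ_{i≠j} (Σ_{l=1}^{k−1} κᵢ^{l−1} κⱼ^{k−1−l}) η_{ij} η_{ji}; moreover, whenever κᵢ ≠ κⱼ the coefficient k · Σ_{l=1}^{k−1} κᵢ^{l−1} κⱼ^{k−1−l} equals (∂p_k/∂κᵢ(κ) − ∂p_k/∂κⱼ(κ))/(κᵢ − κⱼ) = k(κᵢ^{k−1} − κⱼ^{k−1})/(κᵢ − κⱼ). -/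
/-!
By cyclicity of the trace, the derivative of `X ↦ tr (X ^ k)` is `η ↦ k tr (X ^ (k - 1) η)`.
Differentiating `X ^ (k - 1)` once more gives
`d²P_k(A)(η, η) = k ∑_{l < k-1} tr (A ^ l η A ^ (k - 2 - l) η)`, and for `A = diagonal κ` each
trace is `∑_{i,j} κᵢ^l κⱼ^(k-2-l) ηᵢⱼ ηⱼᵢ`. On the diagonal `i = j` the inner sum collapses to
`(k - 1) κᵢ^(k-2)`; off the diagonal it is the geometric sum `(κᵢ^(k-1) - κⱼ^(k-1)) / (κᵢ - κⱼ)`.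
-/

attribute [local instance] Matrix.normedAddCommGroup Matrix.normedSpace

open Finset

namespace Matrix

-- Make `Matrix ι ι 𝕜 →L[𝕜] _` elaborate with the topology of the sup norm, the one `fderiv` uses,
-- rather than the product topology, which is equal to it only after unfolding instances.
attribute [local instance 10] instTopologicalSpaceMatrix Matrix.instUniformSpace

variable {ι 𝕜 : Type*} [Fintype ι] [NontriviallyNormedField 𝕜] [CompleteSpace 𝕜]

noncomputable def traceCLM : Matrix ι ι 𝕜 →L[𝕜] 𝕜 :=
  LinearMap.toContinuousLinearMap (traceLinearMap ι 𝕜 𝕜)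

@[simp] lemma traceCLM_apply (A : Matrix ι ι 𝕜) : traceCLM A = A.trace := rfl

variable [DecidableEq ι]

noncomputable def mulCLM : Matrix ι ι 𝕜 →L[𝕜] Matrix ι ι 𝕜 →L[𝕜] Matrix ι ι 𝕜 :=
  LinearMap.toContinuousLinearMap
    (LinearMap.toContinuousLinearMap.toLinearMap ∘ₗ LinearMap.mul 𝕜 (Matrix ι ι 𝕜))

@[simp] lemma mulCLM_apply (A B : Matrix ι ι 𝕜) : mulCLM A B = A * B := rfl

noncomputable def traceMulCLM : Matrix ι ι 𝕜 →L[𝕜] Matrix ι ι 𝕜 →L[𝕜] 𝕜 :=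
  (ContinuousLinearMap.compL 𝕜 _ _ 𝕜 traceCLM).comp mulCLM

@[simp] lemma traceMulCLM_apply (A B : Matrix ι ι 𝕜) : traceMulCLM A B = (A * B).trace := rfl

noncomputable def powDeriv (m : ℕ) (X : Matrix ι ι 𝕜) : Matrix ι ι 𝕜 →L[𝕜] Matrix ι ι 𝕜 :=
  ∑ l ∈ range m, (mulCLM (X ^ l)).comp (mulCLM.flip (X ^ (m - 1 - l)))

@[simp] lemma powDeriv_apply (m : ℕ) (X η : Matrix ι ι 𝕜) :
    powDeriv m X η = ∑ l ∈ range m, X ^ l * η * X ^ (m - 1 - l) := by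
  simp [powDeriv, Matrix.mul_assoc]

theorem hasFDerivAt_pow (m : ℕ) (X : Matrix ι ι 𝕜) :
    HasFDerivAt (fun Y : Matrix ι ι 𝕜 => Y ^ m) (powDeriv m X) X := by
  induction m with
  | zero => simpa [powDeriv] using hasFDerivAt_const (1 : Matrix ι ι 𝕜) X
  | succ m ih =>
    simp_rw [pow_succ]
    refine (mulCLM.hasFDerivAt_of_bilinear ih (hasFDerivAt_id X)).congr_fderiv ?_
    ext1 η
    simp only [ContinuousLinearMap.precompR_apply, ContinuousLinearMap.compL_apply,
      ContinuousLinearMap.comp_id, id_eq, _root_.add_apply, mulCLM_apply,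
      ContinuousLinearMap.precompL_apply, powDeriv_apply, add_tsub_cancel_right,
      sum_range_succ, tsub_self, pow_zero, Matrix.mul_one, sum_mul]
    rw [add_comm]
    congr 1
    refine sum_congr rfl fun l hl => ?_
    have hl : l < m := mem_range.mp hl
    rw [Matrix.mul_assoc, ← pow_succ, show m - 1 - l + 1 = m - l by omega]

theorem hasFDerivAt_trace_pow (m : ℕ) (X : Matrix ι ι 𝕜) :
    HasFDerivAt (fun Y : Matrix ι ι 𝕜 => (Y ^ m).trace)
      ((m : 𝕜) • traceMulCLM (X ^ (m - 1))) X := by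
  refine (traceCLM.hasFDerivAt.comp X (hasFDerivAt_pow m X)).congr_fderiv ?_
  have hcyc : ∀ η, ∀ l ∈ range m,
      (X ^ l * η * X ^ (m - 1 - l)).trace = (X ^ (m - 1) * η).trace := fun η l hl => by
    rw [trace_mul_cycle, ← pow_add, Nat.sub_add_cancel (Nat.le_sub_one_of_lt (mem_range.mp hl))]
  ext1 η
  simp only [ContinuousLinearMap.comp_apply, powDeriv_apply, map_sum, traceCLM_apply,
    _root_.smul_apply, traceMulCLM_apply, smul_eq_mul, sum_congr rfl (hcyc η), sum_const,
    card_range, nsmul_eq_mul]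

theorem fderiv_trace_pow (m : ℕ) :
    fderiv 𝕜 (fun X : Matrix ι ι 𝕜 => (X ^ m).trace)
      = fun X => (m : 𝕜) • traceMulCLM (X ^ (m - 1)) :=
  funext fun X => (hasFDerivAt_trace_pow m X).fderiv

theorem fderiv_fderiv_trace_pow_apply (m : ℕ) (A η : Matrix ι ι 𝕜) :
    fderiv 𝕜 (fderiv 𝕜 fun X : Matrix ι ι 𝕜 => (X ^ m).trace) A η η
      = m * ∑ l ∈ range (m - 1), (A ^ l * η * A ^ (m - 2 - l) * η).trace := by
  have h : HasFDerivAt (fun X : Matrix ι ι 𝕜 => (m : 𝕜) • traceMulCLM (X ^ (m - 1)))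
      ((m : 𝕜) • traceMulCLM.comp (powDeriv (m - 1) A)) A :=
    (traceMulCLM.hasFDerivAt.comp A (hasFDerivAt_pow (m - 1) A)).const_smul (m : 𝕜)
  rw [fderiv_trace_pow, h.fderiv]
  simp only [_root_.smul_apply, ContinuousLinearMap.comp_apply, powDeriv_apply, map_sum,
    _root_.sum_apply, traceMulCLM_apply, smul_eq_mul]
  -- `m - 1 - 1 - l` and `m - 2 - l` agree definitionally
  rfl

theorem trace_diagonal_mul_mul_diagonal_mul {R : Type*} [CommSemiring R] (d e : ι → R)
    (η : Matrix ι ι R) :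
    (diagonal d * η * diagonal e * η).trace = ∑ i, ∑ j, d i * e j * (η i j * η j i) := by
  refine sum_congr rfl fun i _ => ?_
  rw [diag_apply, mul_apply]
  refine sum_congr rfl fun j _ => ?_
  rw [mul_diagonal, diagonal_mul]
  ring

theorem fderiv_fderiv_trace_pow_diagonal_apply (m : ℕ) (κ : ι → 𝕜) (η : Matrix ι ι 𝕜) :
    fderiv 𝕜 (fderiv 𝕜 fun X : Matrix ι ι 𝕜 => (X ^ m).trace) (diagonal κ) η η
      = m * ∑ i, ∑ j, (∑ l ∈ range (m - 1), κ i ^ l * κ j ^ (m - 2 - l)) * η i j * η j i := by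
  simp only [fderiv_fderiv_trace_pow_apply, diagonal_pow, trace_diagonal_mul_mul_diagonal_mul,
    Pi.pow_apply]
  rw [sum_comm]
  refine congrArg _ (sum_congr rfl fun i _ => ?_)
  rw [sum_comm]
  simp only [sum_mul, mul_assoc]

end Matrix

theorem Fintype.sum_sum_eq_sum_diag_add {ι M : Type*} [Fintype ι] [DecidableEq ι]
    [AddCommMonoid M] (f : ι → ι → M) :
    ∑ i, ∑ j, f i j = ∑ i, f i i + ∑ i, ∑ j, if i = j then 0 else f i j := by
  rw [← sum_add_distrib]
  refine Finset.sum_congr rfl fun i _ => ?_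
  simp only [sum_ite, sum_const_zero, filter_ne, zero_add]
  exact (add_sum_erase _ _ (mem_univ i)).symm

theorem hasFDerivAt_sum_pow {ι 𝕜 : Type*} [Fintype ι] [NontriviallyNormedField 𝕜] (k : ℕ)
    (x : ι → 𝕜) :
    HasFDerivAt (fun x : ι → 𝕜 => ∑ a, x a ^ k)
      (∑ a, ((k : 𝕜) * x a ^ (k - 1)) • (ContinuousLinearMap.proj a : (ι → 𝕜) →L[𝕜] 𝕜)) x :=
  HasFDerivAt.fun_sum fun a _ =>
    (hasDerivAt_pow k (x a)).comp_hasFDerivAt x (hasFDerivAt_apply (𝕜 := 𝕜) a x)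

theorem fderiv_sum_pow_apply_single {ι 𝕜 : Type*} [Fintype ι] [DecidableEq ι]
    [NontriviallyNormedField 𝕜] (k : ℕ) (x : ι → 𝕜) (i : ι) :
    fderiv 𝕜 (fun x : ι → 𝕜 => ∑ a, x a ^ k) x (Pi.single i 1) = k * x i ^ (k - 1) := by
  simp only [(hasFDerivAt_sum_pow k x).fderiv, _root_.sum_apply, smul_apply,
    ContinuousLinearMap.proj_apply, Pi.single_apply, smul_eq_mul, mul_ite, mul_one, mul_zero,
    sum_ite_eq', mem_univ, ↓reduceIte]

theorem stmt_6_general (n k : ℕ) (κ : Fin n → ℝ) :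
    (∀ η : Matrix (Fin n) (Fin n) ℝ,
      fderiv ℝ (fderiv ℝ (fun X : Matrix (Fin n) (Fin n) ℝ => (X ^ k).trace))
          (Matrix.diagonal κ) η η
        = (k : ℝ) * ((k : ℝ) - 1) * ∑ i, κ i ^ (k - 2) * (η i i) ^ 2
          + (k : ℝ) * ∑ i, ∑ j,
              if i = j then 0 else
                (∑ l ∈ Finset.range (k - 1), κ i ^ l * κ j ^ (k - 2 - l)) * η i j * η j i) ∧
    ∀ i j : Fin n, κ i ≠ κ j →
      (k : ℝ) * ∑ l ∈ Finset.range (k - 1), κ i ^ l * κ j ^ (k - 2 - l)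
          = (fderiv ℝ (fun x : Fin n → ℝ => ∑ a, x a ^ k) κ (Pi.single i 1)
              - fderiv ℝ (fun x : Fin n → ℝ => ∑ a, x a ^ k) κ (Pi.single j 1))
            / (κ i - κ j) ∧
      (k : ℝ) * ∑ l ∈ Finset.range (k - 1), κ i ^ l * κ j ^ (k - 2 - l)
          = (k : ℝ) * (κ i ^ (k - 1) - κ j ^ (k - 1)) / (κ i - κ j) := by
  have hgeom (i j : Fin n) (hij : κ i ≠ κ j) :
      (k : ℝ) * ∑ l ∈ range (k - 1), κ i ^ l * κ j ^ (k - 2 - l)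
        = k * (κ i ^ (k - 1) - κ j ^ (k - 1)) / (κ i - κ j) := by
    rw [eq_div_iff (sub_ne_zero.2 hij), mul_assoc]
    exact congrArg _ (geom_sum₂_mul _ _ _)
  refine ⟨fun η => ?_, fun i j hij => ⟨?_, hgeom i j hij⟩⟩
  · -- not `rw`: the statement's matrix instances match the lemma's only up to unfolding
    refine (Matrix.fderiv_fderiv_trace_pow_diagonal_apply k κ η).trans ?_
    rw [Fintype.sum_sum_eq_sum_diag_add, mul_add]
    congr 1
    rw [mul_sum, mul_sum]
    refine Finset.sum_congr rfl fun i _ => ?_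
    -- the truncated `k - 1` is harmless: at `k = 0` both sides vanish
    have hcast : (k : ℝ) * ((k - 1 : ℕ) : ℝ) = k * (k - 1) := by
      rcases k with _ | k <;> simp
    rw [show ∑ l ∈ range (k - 1), κ i ^ l * κ i ^ (k - 2 - l) = ((k - 1 : ℕ) : ℝ) * κ i ^ (k - 2)
      from geom_sum₂_self _ _]
    linear_combination (κ i ^ (k - 2) * η i i ^ 2) * hcast
  · rw [fderiv_sum_pow_apply_single, fderiv_sum_pow_apply_single, hgeom i j hij, mul_sub]

/-- For `k ≥ 2` and `A = diagonal κ`, the second Fréchet derivative of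
`P_k(A) = trace (A ^ k)` satisfies
`d²P_k(A)(η,η) = k(k-1) ∑ᵢ κᵢ^{k-2} ηᵢᵢ² + k ∑_{i≠j} (∑_{l=1}^{k-1} κᵢ^{l-1} κⱼ^{k-1-l}) ηᵢⱼ ηⱼᵢ`
(inner sums reindexed over `l ∈ {0, …, k-2}`); moreover for `κᵢ ≠ κⱼ` the off-diagonal
coefficient equals `(∂p_k/∂κᵢ(κ) - ∂p_k/∂κⱼ(κ))/(κᵢ - κⱼ) = k (κᵢ^{k-1} - κⱼ^{k-1})/(κᵢ - κⱼ)`. -/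
theorem stmt_6 (n k : ℕ) (hk : 2 ≤ k) (κ : Fin n → ℝ) :
    (∀ η : Matrix (Fin n) (Fin n) ℝ,
      fderiv ℝ (fderiv ℝ (fun X : Matrix (Fin n) (Fin n) ℝ => (X ^ k).trace))
          (Matrix.diagonal κ) η η
        = (k : ℝ) * ((k : ℝ) - 1) * ∑ i, κ i ^ (k - 2) * (η i i) ^ 2
          + (k : ℝ) * ∑ i, ∑ j,
              if i = j then 0 else
                (∑ l ∈ Finset.range (k - 1), κ i ^ l * κ j ^ (k - 2 - l)) * η i j * η j i) ∧
    ∀ i j : Fin n, κ i ≠ κ j →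
      (k : ℝ) * ∑ l ∈ Finset.range (k - 1), κ i ^ l * κ j ^ (k - 2 - l)
          = (fderiv ℝ (fun x : Fin n → ℝ => ∑ a, x a ^ k) κ (Pi.single i 1)
              - fderiv ℝ (fun x : Fin n → ℝ => ∑ a, x a ^ k) κ (Pi.single j 1))
            / (κ i - κ j) ∧
      (k : ℝ) * ∑ l ∈ Finset.range (k - 1), κ i ^ l * κ j ^ (k - 2 - l)
          = (k : ℝ) * (κ i ^ (k - 1) - κ j ^ (k - 1)) / (κ i - κ j) :=
  stmt_6_general n k κ
end

section
/- Let Γ ⊆ ℝⁿ be open, U ⊆ ℝ^m open, ψ : U → ℝ be C¹ with (p₁(κ),…,p_m(κ)) ∈ U for all κ ∈ Γ, and let f(κ) = ψ(p₁(κ),…,p_m(κ)) satisfy ∂f/∂κᵢ(κ) > 0 for all κ ∈ Γ and all i (f is strictly monotone). Let A be an n×n real matrix, diagonalisable with eigenvalues κ ∈ Γ, and let g be a symmetric positive definite matrix with gA = Aᵀg (A is g-selfadjoint). Set F'(A) = Σ_{l=1}^m l·∂_lψ(P₁(A),…,P_m(A))·A^{l−1}. Then for every nonzero ξ ∈ ℝⁿ,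 trace(F'(A) · g⁻¹ · ξξᵀ) > 0; that is, the bilinear form a ↦ trace(F'(A)·g⁻¹·â) is positive definite on symmetric rank-one forms ξ ⊗ ξ. -/
open Matrix

attribute [local instance] Matrix.normedAddCommGroup Matrix.normedSpace

/-- `P_k(A) = trace (A ^ k)`, bundled as the vector `(P₁(A), …, P_m(A))`. -/
noncomputable def Pvec (n m : ℕ) (A : Matrix (Fin n) (Fin n) ℝ) : Fin m → ℝ :=
  fun l => (A ^ ((l : ℕ) + 1)).trace

/-- `p_k(κ) = ∑ i, κ i ^ k`, bundled as the vector `(p₁(κ), …, p_m(κ))`. -/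
def pvec (n m : ℕ) (κ : Fin n → ℝ) : Fin m → ℝ :=
  fun l => ∑ i, κ i ^ ((l : ℕ) + 1)

/-- `F'(A) = ∑_{l=1}^m l ∂ψ/∂P_l (P₁(A),…,P_m(A)) A^{l-1}`
(the index `l : Fin m` represents the integer `l + 1 ∈ {1, …, m}`). -/
noncomputable def Fprime (n m : ℕ) (ψ : (Fin m → ℝ) → ℝ) (A : Matrix (Fin n) (Fin n) ℝ) :
    Matrix (Fin n) (Fin n) ℝ :=
  ∑ l : Fin m,
    (((l : ℕ) + 1 : ℝ) * fderiv ℝ ψ (Pvec n m A) (Pi.single l 1)) • A ^ (l : ℕ)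

/-! Write `A = S diag(κ) S⁻¹` and `F'(A) = ∑ cₗ Aˡ`. Then `F'(A) = S diag(q) S⁻¹` with
`qᵢ = ∑ cₗ κᵢˡ`, which the chain rule identifies with `∂f/∂κᵢ(κ) > 0`, and `F'(A)` is
`g`-selfadjoint like `A`. Hence `G = Sᵀ g S` is positive definite and commutes with `diag(q)`, so
`G diag(q) = diag(√q) G diag(√q)` is positive definite; by congruence so are `g F'(A)` and
`F'(A) g⁻¹`, and the quadratic form of the latter is `ξ ↦ trace (F'(A) g⁻¹ ξξᵀ)`. -/

namespace Matrix

variable {ι R : Type*} [Fintype ι] [DecidableEq ι] [CommRing R]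

theorem inv_mul_pow_mul {S : Matrix ι ι R} (hS : IsUnit S) (A : Matrix ι ι R) (k : ℕ) :
    S⁻¹ * A ^ k * S = (S⁻¹ * A * S) ^ k := by
  obtain ⟨u, rfl⟩ := hS
  rw [← coe_units_inv, Units.conj_pow']

theorem inv_mul_sum_smul_pow_mul {m : ℕ} {S A : Matrix ι ι R} {κ : ι → R} (hS : IsUnit S)
    (hdiag : S⁻¹ * A * S = diagonal κ) (c : Fin m → R) :
    S⁻¹ * (∑ l, c l • A ^ (l : ℕ)) * S = diagonal fun i => ∑ l, c l * κ i ^ (l : ℕ) := by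
  simp only [Finset.mul_sum, Finset.sum_mul, mul_smul_comm, smul_mul_assoc,
    inv_mul_pow_mul hS, hdiag, diagonal_pow]
  ext i j
  simp [sum_apply, diagonal_apply, Finset.sum_ite_irrel]

theorem semiconjBy_sum_smul_pow_transpose {m : ℕ} {g A : Matrix ι ι R}
    (h : SemiconjBy g A Aᵀ) (c : Fin m → R) :
    SemiconjBy g (∑ l, c l • A ^ (l : ℕ)) (∑ l, c l • A ^ (l : ℕ))ᵀ := by
  simp only [SemiconjBy, Finset.mul_sum, transpose_sum, Finset.sum_mul, transpose_smul,
    mul_smul_comm, smul_mul_assoc, (h.pow_right _).eq, transpose_pow]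

end Matrix

namespace Matrix.PosDef

variable {ι : Type*} [Fintype ι]

theorem mul_diagonal_of_commute [DecidableEq ι] {G : Matrix ι ι ℝ} (hG : G.PosDef) {d : ι → ℝ}
    (hd : ∀ i, 0 < d i) (hcomm : Commute G (diagonal d)) : (G * diagonal d).PosDef := by
  set r : ι → ℝ := fun i => √(d i)
  -- `G` only couples indices with equal `d`, so it also commutes with `diagonal (√d)`.
  have hsplit : G * diagonal d = (diagonal r)ᴴ * G * diagonal r := by
    ext i j
    have hij := congr_fun₂ hcomm.eq i j
    simp only [mul_diagonal, diagonal_mul, diagonal_conjTranspose, star_trivial] at hij ⊢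
    rcases eq_or_ne (G i j) 0 with h | h
    · simp [h]
    · have hdij : d i = d j := (mul_left_cancel₀ h (hij.trans (mul_comm _ _))).symm
      simp only [r, hdij, mul_comm (√(d j)) (G i j), mul_assoc, Real.mul_self_sqrt (hd j).le]
  rw [hsplit]
  refine hG.conjTranspose_mul_mul_same (mulVec_injective_iff_isUnit.mpr ?_)
  exact isUnit_diagonal.mpr (Pi.isUnit_iff.mpr fun i => (Real.sqrt_pos.mpr (hd i)).ne'.isUnit)

theorem mul_of_semiconjBy_of_diagonalizable [DecidableEq ι] {g M S : Matrix ι ι ℝ} {d : ι → ℝ}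
    (hg : g.PosDef) (hgM : SemiconjBy g M Mᵀ) (hS : IsUnit S)
    (hMS : S⁻¹ * M * S = diagonal d) (hd : ∀ i, 0 < d i) : (g * M).PosDef := by
  have hSdet : IsUnit S.det := (isUnit_iff_isUnit_det S).mp hS
  have hMS' : M * S = S * diagonal d := by
    rw [← hMS, mul_assoc, mul_nonsing_inv_cancel_left _ _ hSdet]
  have hG : (Sᵀ * g * S).PosDef := by
    simpa [conjTranspose_eq_transpose_of_trivial] using
      hg.conjTranspose_mul_mul_same (mulVec_injective_iff_isUnit.mpr hS)
  have hcomm : Commute (Sᵀ * g * S) (diagonal d) := by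
    calc Sᵀ * g * S * diagonal d = Sᵀ * (g * M) * S := by rw [mul_assoc, ← hMS']; noncomm_ring
      _ = (M * S)ᵀ * g * S := by rw [hgM.eq, transpose_mul]; noncomm_ring
      _ = diagonal d * (Sᵀ * g * S) := by
        rw [hMS', transpose_mul, diagonal_transpose]; noncomm_ring
  have hgM_eq : g * M = (S⁻¹)ᴴ * (Sᵀ * g * S * diagonal d) * S⁻¹ := by
    have hreassoc : (S⁻¹)ᵀ * (Sᵀ * g * S * (S⁻¹ * M * S)) * S⁻¹
        = (S * S⁻¹)ᵀ * g * (S * S⁻¹) * M * (S * S⁻¹) := by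
      rw [transpose_mul]; noncomm_ring
    rw [conjTranspose_eq_transpose_of_trivial, ← hMS, hreassoc, mul_nonsing_inv _ hSdet]
    simp
  rw [hgM_eq]
  exact (mul_diagonal_of_commute hG hd hcomm).conjTranspose_mul_mul_same
    (mulVec_injective_iff_isUnit.mpr (isUnit_nonsing_inv_iff.mpr hS))

theorem mul_inv_of_mul [DecidableEq ι] {g M : Matrix ι ι ℝ} (hg : g.PosDef)
    (hgM : (g * M).PosDef) : (M * g⁻¹).PosDef := by
  have hginv : (g⁻¹)ᴴ = g⁻¹ := by rw [conjTranspose_nonsing_inv, hg.isHermitian.eq]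
  have hMg : M * g⁻¹ = (g⁻¹)ᴴ * (g * M) * g⁻¹ := by
    rw [hginv, ← mul_assoc, nonsing_inv_mul _ ((isUnit_iff_isUnit_det g).mp hg.isUnit), one_mul]
  rw [hMg]
  exact hgM.conjTranspose_mul_mul_same
    (mulVec_injective_iff_isUnit.mpr (isUnit_nonsing_inv_iff.mpr hg.isUnit))

theorem trace_mul_vecMulVec_self_pos {M : Matrix ι ι ℝ} (hM : M.PosDef) {ξ : ι → ℝ}
    (hξ : ξ ≠ 0) : 0 < (M * vecMulVec ξ ξ).trace := by
  simpa [mul_vecMulVec, trace_vecMulVec, dotProduct_comm] using hM.dotProduct_mulVec_pos hξ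

end Matrix.PosDef

theorem Pvec_eq_pvec_of_conj_eq_diagonal {n m : ℕ} {A S : Matrix (Fin n) (Fin n) ℝ}
    {κ : Fin n → ℝ} (hS : IsUnit S) (hdiag : S⁻¹ * A * S = diagonal κ) :
    Pvec n m A = pvec n m κ := by
  funext l
  rw [Pvec, ← trace_conj' hS, inv_mul_pow_mul hS, hdiag, diagonal_pow, trace_diagonal]
  rfl

noncomputable def pvecDeriv (n m : ℕ) (κ : Fin n → ℝ) : (Fin n → ℝ) →L[ℝ] (Fin m → ℝ) :=
  ContinuousLinearMap.pi fun l =>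
    ∑ j, (((l : ℕ) + 1 : ℝ) * κ j ^ (l : ℕ)) • ContinuousLinearMap.proj j

theorem hasFDerivAt_pvec (n m : ℕ) (κ : Fin n → ℝ) :
    HasFDerivAt (pvec n m) (pvecDeriv n m κ) κ := by
  refine hasFDerivAt_pi.mpr fun l => HasFDerivAt.fun_sum fun j _ => ?_
  simpa [Function.comp_def] using (hasDerivAt_pow ((l : ℕ) + 1) (κ j)).comp_hasFDerivAt κ
    (hasFDerivAt_apply (𝕜 := ℝ) (F' := fun _ : Fin n => ℝ) j κ)

theorem pvecDeriv_single (n m : ℕ) (κ : Fin n → ℝ) (i : Fin n) :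
    pvecDeriv n m κ (Pi.single i 1) =
      ∑ l : Fin m, (((l : ℕ) + 1 : ℝ) * κ i ^ (l : ℕ)) • Pi.single l 1 := by
  ext l
  simp [pvecDeriv, Pi.single_apply, Finset.sum_apply]

theorem fderiv_comp_pvec_single {n m : ℕ} {ψ : (Fin m → ℝ) → ℝ} {κ : Fin n → ℝ}
    (hψ : DifferentiableAt ℝ ψ (pvec n m κ)) (i : Fin n) :
    fderiv ℝ (fun x => ψ (pvec n m x)) κ (Pi.single i 1) =
      ∑ l : Fin m, (((l : ℕ) + 1 : ℝ) * fderiv ℝ ψ (pvec n m κ) (Pi.single l 1)) *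
        κ i ^ (l : ℕ) := by
  have hcomp : HasFDerivAt (fun x => ψ (pvec n m x))
      ((fderiv ℝ ψ (pvec n m κ)).comp (pvecDeriv n m κ)) κ :=
    hψ.hasFDerivAt.comp κ (hasFDerivAt_pvec n m κ)
  rw [hcomp.fderiv, ContinuousLinearMap.comp_apply, pvecDeriv_single, map_sum]
  simp only [map_smul, smul_eq_mul]
  exact Finset.sum_congr rfl fun l _ => by ring

theorem stmt_13_general (n m : ℕ) (Γ : Set (Fin n → ℝ))
    (U : Set (Fin m → ℝ)) (hU : IsOpen U)
    (ψ : (Fin m → ℝ) → ℝ) (hψ : ContDiffOn ℝ 1 ψ U)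
    (hΓU : ∀ κ ∈ Γ, pvec n m κ ∈ U)
    (hmono : ∀ κ ∈ Γ, ∀ i : Fin n,
      0 < fderiv ℝ (fun x : Fin n → ℝ => ψ (pvec n m x)) κ (Pi.single i 1))
    (A : Matrix (Fin n) (Fin n) ℝ) (κ : Fin n → ℝ) (hκ : κ ∈ Γ)
    (S : Matrix (Fin n) (Fin n) ℝ) (hS : IsUnit S)
    (hdiag : S⁻¹ * A * S = Matrix.diagonal κ)
    (g : Matrix (Fin n) (Fin n) ℝ) (hg : g.PosDef)
    (hsa : g * A = Aᵀ * g) :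
    ∀ ξ : Fin n → ℝ, ξ ≠ 0 →
      0 < (Fprime n m ψ A * g⁻¹ * Matrix.vecMulVec ξ ξ).trace := by
  intro ξ hξ
  have hψκ : DifferentiableAt ℝ ψ (pvec n m κ) :=
    (hψ.differentiableOn one_ne_zero).differentiableAt (hU.mem_nhds (hΓU κ hκ))
  set c : Fin m → ℝ := fun l => ((l : ℕ) + 1 : ℝ) * fderiv ℝ ψ (pvec n m κ) (Pi.single l 1)
  have hF : Fprime n m ψ A = ∑ l, c l • A ^ (l : ℕ) := by
    rw [Fprime, Pvec_eq_pvec_of_conj_eq_diagonal hS hdiag]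
  have hq : ∀ i, 0 < ∑ l, c l * κ i ^ (l : ℕ) := fun i =>
    fderiv_comp_pvec_single hψκ i ▸ hmono κ hκ i
  have hgF : (g * Fprime n m ψ A).PosDef := by
    rw [hF]
    exact hg.mul_of_semiconjBy_of_diagonalizable (semiconjBy_sum_smul_pow_transpose hsa c) hS
      (inv_mul_sum_smul_pow_mul hS hdiag c) hq
  exact (hg.mul_inv_of_mul hgF).trace_mul_vecMulVec_self_pos hξ

/-- Let `Γ ⊆ ℝⁿ` be open, `ψ` of class `C¹` on the open `U ⊆ ℝ^m`
with `(p₁(κ),…,p_m(κ)) ∈ U` for all `κ ∈ Γ`, and suppose the associated symmetric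
function `f(κ) = ψ(p₁(κ),…,p_m(κ))` is strictly monotone on `Γ`. If `A` is
diagonalisable with eigenvalues `κ ∈ Γ` and `g`-selfadjoint for a symmetric positive
definite `g`, then for every nonzero `ξ ∈ ℝⁿ`,
`trace (F'(A) g⁻¹ (ξ ξᵀ)) > 0`. -/
theorem stmt_13 (n m : ℕ) (Γ : Set (Fin n → ℝ)) (hΓ : IsOpen Γ)
    (U : Set (Fin m → ℝ)) (hU : IsOpen U)
    (ψ : (Fin m → ℝ) → ℝ) (hψ : ContDiffOn ℝ 1 ψ U)
    (hΓU : ∀ κ ∈ Γ, pvec n m κ ∈ U)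
    (hmono : ∀ κ ∈ Γ, ∀ i : Fin n,
      0 < fderiv ℝ (fun x : Fin n → ℝ => ψ (pvec n m x)) κ (Pi.single i 1))
    (A : Matrix (Fin n) (Fin n) ℝ) (κ : Fin n → ℝ) (hκ : κ ∈ Γ)
    (S : Matrix (Fin n) (Fin n) ℝ) (hS : IsUnit S)
    (hdiag : S⁻¹ * A * S = Matrix.diagonal κ)
    (g : Matrix (Fin n) (Fin n) ℝ) (hg : g.PosDef) (hgsym : g.IsSymm)
    (hsa : g * A = Aᵀ * g) :
    ∀ ξ : Fin n → ℝ, ξ ≠ 0 →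
      0 < (Fprime n m ψ A * g⁻¹ * Matrix.vecMulVec ξ ξ).trace :=
  stmt_13_general n m Γ U hU ψ hψ hΓU hmono A κ hκ S hS hdiag g hg hsa
end

section
/- Let Γ ⊆ ℝⁿ be open, convex and symmetric under permutations of coordinates, U ⊆ ℝ^m open, ψ : U → ℝ be C² with (p₁(κ),…,p_m(κ)) ∈ U for all κ ∈ Γ, and suppose f(κ) = ψ(p₁(κ),…,p_m(κ)) is concave on Γ. Let F(A) = ψ(P₁(A),…,P_m(A)), let A be diagonalisable with S⁻¹AS = diag(κ) for some invertible S and κ ∈ Γ with pairwise distinct entries, and let η be an n×n real matrix such that S⁻¹ηS is a symmetric matrix. Then d²F(A)(η,η) ≤ 0. If instead f is convex on Γ, then d²F(A)(η,η) ≥ 0. -/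
attribute [local instance] Matrix.normedAddCommGroup Matrix.normedSpace

/-!
Conjugation by `S` does not change the power traces, so `d²F(A)(η, η)` is the second derivative
at `0` of `t ↦ ψ (P (D + t B))`, where `D = diagonal κ` and `B = S⁻¹ η S` is symmetric.
Differentiating the traces twice splits it as `d²f(κ)(w, w) + ∑_{p ≠ q} B_pq² c_pq`, where
`w = diag B` and `c_pq = (∂ₚf - ∂_q f)(κ) / (κ p - κ q)`. The first term is the second derivative
of `f` along the line `κ + t w`, hence `≤ 0` by concavity. Each `c_pq` is `≤ 0` because `f` is
concave and takes the same value at `κ` and at `κ` with the entries `p`, `q` exchanged, so the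
derivative of `f` at `κ` towards that point is `≥ 0`. The convex case is the concave one for `-ψ`.
-/

open Matrix Finset Topology

section MatrixCalculus

variable {ι : Type*} [Fintype ι]

-- The sup norm on matrices is not submultiplicative, so there is no `NormedRing` structure and
-- the product rule has to come from the bilinear map `LinearMap.mul`.
theorem HasDerivAt.matrix_mul {f g : ℝ → Matrix ι ι ℝ} {f' g' : Matrix ι ι ℝ} {t : ℝ}
    (hf : HasDerivAt f f' t) (hg : HasDerivAt g g' t) :
    HasDerivAt (fun s => f s * g s) (f' * g t + f t * g') t := by
  have h := (LinearMap.mul ℝ (Matrix ι ι ℝ)).toContinuousBilinearMap.hasDerivAt_of_bilinear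
    (fun _ => hf) (fun _ => hg)
  rw [add_comm]
  exact h

theorem HasDerivAt.matrix_trace {f : ℝ → Matrix ι ι ℝ} {f' : Matrix ι ι ℝ} {t : ℝ}
    (hf : HasDerivAt f f' t) : HasDerivAt (fun s => (f s).trace) f'.trace t :=
  (traceLinearMap ι ℝ ℝ).toContinuousLinearMap.hasFDerivAt.comp_hasDerivAt t hf

variable [DecidableEq ι]

theorem HasDerivAt.matrix_pow {f : ℝ → Matrix ι ι ℝ} {f' : Matrix ι ι ℝ} {t : ℝ}
    (hf : HasDerivAt f f' t) (k : ℕ) :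
    HasDerivAt (fun s => f s ^ k) (∑ i ∈ range k, f t ^ i * f' * f t ^ (k - 1 - i)) t := by
  induction k with
  | zero =>
    simp only [pow_zero, sum_range_zero]
    exact hasDerivAt_const t (1 : Matrix ι ι ℝ)
  | succ k ih =>
    convert ih.matrix_mul hf using 1
    · ext1 s; exact pow_succ _ _
    rw [sum_range_succ, sum_mul, Nat.add_sub_cancel, Nat.sub_self, pow_zero, mul_one]
    congr 1
    refine sum_congr rfl fun i hi => ?_
    rw [mul_assoc _ _ (f t), ← pow_succ]
    congr 2
    have := mem_range.1 hi
    omega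

theorem contDiff_matrix_pow {N : WithTop ℕ∞} (k : ℕ) :
    ContDiff ℝ N fun X : Matrix ι ι ℝ => X ^ k := by
  induction k with
  | zero => simpa using contDiff_const
  | succ k ih =>
    simp_rw [pow_succ]
    exact (LinearMap.mul ℝ (Matrix ι ι ℝ)).toContinuousBilinearMap.isBoundedBilinearMap.contDiff
      |>.comp (ih.prodMk contDiff_id)

theorem Matrix.trace_sum_pow_mul_pow (Z Y : Matrix ι ι ℝ) (k : ℕ) :
    (∑ i ∈ range k, Z ^ i * Y * Z ^ (k - 1 - i)).trace = k * (Z ^ (k - 1) * Y).trace := by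
  rw [trace_sum, ← nsmul_eq_mul, ← card_range k, ← sum_const, card_range]
  refine sum_congr rfl fun i hi => ?_
  rw [trace_mul_comm, ← mul_assoc, ← pow_add]
  congr 3
  have := mem_range.1 hi
  omega

theorem Matrix.trace_diagonal_pow_mul (κ : ι → ℝ) (B : Matrix ι ι ℝ) (l : ℕ) :
    (diagonal κ ^ l * B).trace = ∑ p, κ p ^ l * B p p := by
  simp [diagonal_pow, trace, diagonal_mul]

theorem Matrix.trace_diagonal_pow_mul_diagonal_pow_mul (κ : ι → ℝ) (B : Matrix ι ι ℝ)
    (i j : ℕ) :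
    (diagonal κ ^ i * B * diagonal κ ^ j * B).trace
      = ∑ p, ∑ q, κ p ^ i * κ q ^ j * (B p q * B q p) := by
  refine sum_congr rfl fun p _ => ?_
  rw [diag_apply, mul_apply]
  simp only [diagonal_pow, mul_diagonal, diagonal_mul, Pi.pow_apply]
  exact sum_congr rfl fun q _ => by ring

end MatrixCalculus

section SecondDerivative

variable {E : Type*} [NormedAddCommGroup E] [NormedSpace ℝ E]

theorem hasDerivAt_add_smul (x v : E) (t : ℝ) : HasDerivAt (fun s : ℝ => x + s • v) v t :=
  (((hasDerivAt_id t).smul_const v).const_add x).congr_deriv (one_smul ℝ v)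

theorem hasDerivAt_deriv_comp {U : Set E} (hU : IsOpen U) {ψ : E → ℝ}
    (hψ : ContDiffOn ℝ 2 ψ U) {u u' : ℝ → E} {u'' : E} {t₀ : ℝ}
    (hu : ∀ t, HasDerivAt u (u' t) t) (hu' : HasDerivAt u' u'' t₀) (ht₀ : u t₀ ∈ U) :
    HasDerivAt (deriv fun t => ψ (u t))
      (fderiv ℝ (fderiv ℝ ψ) (u t₀) (u' t₀) (u' t₀) + fderiv ℝ ψ (u t₀) u'') t₀ := by
  have hderiv : deriv (fun t => ψ (u t)) =ᶠ[𝓝 t₀] fun t => fderiv ℝ ψ (u t) (u' t) := by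
    filter_upwards [(hu t₀).continuousAt.preimage_mem_nhds (hU.mem_nhds ht₀)] with t ht
    exact ((hψ.differentiableOn two_ne_zero).differentiableAt (hU.mem_nhds ht)).hasFDerivAt
      |>.comp_hasDerivAt t (hu t) |>.deriv
  have hψ' : DifferentiableAt ℝ (fderiv ℝ ψ) (u t₀) :=
    ((hψ.fderiv_of_isOpen hU (m := 1) le_rfl).differentiableOn one_ne_zero).differentiableAt
      (hU.mem_nhds ht₀)
  exact ((hψ'.hasFDerivAt.comp_hasDerivAt t₀ (hu t₀)).clm_apply hu').congr_of_eventuallyEq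
    hderiv

theorem fderiv_fderiv_apply_eq_deriv_deriv {V : Set E} (hV : IsOpen V) {F : E → ℝ}
    (hF : ContDiffOn ℝ 2 F V) {A : E} (hA : A ∈ V) (η : E) :
    fderiv ℝ (fderiv ℝ F) A η η = deriv (deriv fun t : ℝ => F (A + t • η)) 0 := by
  have h := hasDerivAt_deriv_comp hV hF (hasDerivAt_add_smul A η) (hasDerivAt_const 0 η)
    (by simpa using hA)
  simpa using h.deriv.symm

end SecondDerivative

section Concavity

theorem ConcaveOn.comp_line {E : Type*} [AddCommGroup E] [Module ℝ E] {s : Set E} {f : E → ℝ}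
    (hf : ConcaveOn ℝ s f) (x v : E) :
    ConcaveOn ℝ ((fun t : ℝ => x + t • v) ⁻¹' s) fun t => f (x + t • v) := by
  have hline : ⇑(AffineMap.lineMap x (x + v) : ℝ →ᵃ[ℝ] E) = fun t => x + t • v := by
    ext t; rw [AffineMap.lineMap_apply_module', add_sub_cancel_left, add_comm]
  have h := hf.comp_affineMap (AffineMap.lineMap x (x + v))
  rw [hline] at h
  exact h

variable {s : Set ℝ} {g : ℝ → ℝ}

theorem ConcaveOn.le_add_mul_of_hasDerivAt (hg : ConcaveOn ℝ s g) {x y g' : ℝ} (hx : x ∈ s)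
    (hy : y ∈ s) (hd : HasDerivAt g g' x) : g y ≤ g x + g' * (y - x) := by
  rcases lt_trichotomy y x with hyx | rfl | hxy
  · have h := hg.le_slope_of_hasDerivAt hy hx hyx hd
    rw [slope_def_field, le_div_iff₀ (sub_pos.2 hyx)] at h
    linarith
  · simp
  · have h := hg.slope_le_of_hasDerivAt hx hy hxy hd
    rw [slope_def_field, div_le_iff₀ (sub_pos.2 hxy)] at h
    linarith

theorem ConcaveOn.nonpos_of_hasDerivAt_deriv (hg : ConcaveOn ℝ s g) (hs : IsOpen s) {x c : ℝ}
    (hx : x ∈ s) (hd : ∀ t ∈ s, DifferentiableAt ℝ g t) (h : HasDerivAt (deriv g) c x) :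
    c ≤ 0 :=
  h.hasDerivWithinAt.nonpos_of_antitoneOn (hs.preperfect x hx) (hg.antitoneOn_deriv hd)

end Concavity

section PowerSums

variable {n : ℕ} (m : ℕ)

theorem Pvec_conj {S : Matrix (Fin n) (Fin n) ℝ} (hS : IsUnit S)
    (X : Matrix (Fin n) (Fin n) ℝ) :
    Pvec n m (S⁻¹ * X * S) = Pvec n m X := by
  obtain ⟨u, rfl⟩ := hS
  ext l
  simp only [Pvec, ← coe_units_inv, Units.conj_pow', trace_units_conj']

theorem Pvec_diagonal (κ : Fin n → ℝ) : Pvec n m (diagonal κ) = pvec n m κ := by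
  ext l
  simp [Pvec, pvec, diagonal_pow, trace_diagonal]

theorem pvec_add_smul (κ w : Fin n → ℝ) (t : ℝ) :
    pvec n m (κ + t • w) = Pvec n m (diagonal κ + t • diagonal w) := by
  rw [← Pvec_diagonal, ← diagonal_smul, diagonal_add]
  rfl

theorem pvec_comp_perm (σ : Equiv.Perm (Fin n)) (κ : Fin n → ℝ) :
    pvec n m (fun i => κ (σ i)) = pvec n m κ := by
  ext l
  exact Equiv.sum_comp σ fun i => κ i ^ ((l : ℕ) + 1)

theorem contDiff_Pvec {N : WithTop ℕ∞} : ContDiff ℝ N (Pvec n m) :=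
  contDiff_pi.2 fun _ =>
    (traceLinearMap _ ℝ ℝ).toContinuousLinearMap.contDiff.comp (contDiff_matrix_pow _)

theorem hasDerivAt_Pvec_line (X Y : Matrix (Fin n) (Fin n) ℝ) (t : ℝ) :
    HasDerivAt (fun s => Pvec n m (X + s • Y))
      (fun l => ((l : ℕ) + 1 : ℝ) * ((X + t • Y) ^ (l : ℕ) * Y).trace) t := by
  refine hasDerivAt_pi.2 fun l => ?_
  refine (((hasDerivAt_add_smul X Y t).matrix_pow ((l : ℕ) + 1)).matrix_trace).congr_deriv ?_
  rw [trace_sum_pow_mul_pow, Nat.add_sub_cancel]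
  push_cast
  rfl

theorem hasDerivAt_Pvec_line_deriv (X Y : Matrix (Fin n) (Fin n) ℝ) (t : ℝ) :
    HasDerivAt
      (fun s => fun l : Fin m => ((l : ℕ) + 1 : ℝ) * ((X + s • Y) ^ (l : ℕ) * Y).trace)
      (fun l => ((l : ℕ) + 1 : ℝ) * ∑ i ∈ range l,
        ((X + t • Y) ^ i * Y * (X + t • Y) ^ ((l : ℕ) - 1 - i) * Y).trace) t := by
  refine hasDerivAt_pi.2 fun l => ?_
  refine ((((hasDerivAt_add_smul X Y t).matrix_pow l).matrix_mul
    (hasDerivAt_const t Y)).matrix_trace.const_mul ((l : ℕ) + 1 : ℝ)).congr_deriv ?_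
  simp [sum_mul, trace_sum]

/-- The divided difference `(∂ₚ pvec - ∂_q pvec)(κ) / (κ p - κ q)` of the gradient of `pvec`,
written as a geometric sum so that it is also defined when `κ p = κ q`. -/
def pvecDivDiff (κ : Fin n → ℝ) (p q : Fin n) : Fin m → ℝ :=
  fun l => ((l : ℕ) + 1 : ℝ) * ∑ i ∈ range l, κ p ^ i * κ q ^ ((l : ℕ) - 1 - i)

theorem sub_smul_pvecDivDiff (κ : Fin n → ℝ) (p q : Fin n) :
    (κ p - κ q) • pvecDivDiff m κ p q
      = fun l : Fin m => ((l : ℕ) + 1 : ℝ) * (κ p ^ (l : ℕ) - κ q ^ (l : ℕ)) := by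
  ext l
  simp only [pvecDivDiff, Pi.smul_apply, smul_eq_mul, ← geom_sum₂_mul]
  ring

variable {Γ : Set (Fin n → ℝ)} {U : Set (Fin m → ℝ)} {ψ : (Fin m → ℝ) → ℝ}

theorem hasDerivAt_deriv_comp_Pvec_diagonal_line (hU : IsOpen U)
    (hψ : ContDiffOn ℝ 2 ψ U) {κ : Fin n → ℝ} (hκ : pvec n m κ ∈ U)
    (B : Matrix (Fin n) (Fin n) ℝ) :
    HasDerivAt (deriv fun t : ℝ => ψ (Pvec n m (diagonal κ + t • B)))
      (fderiv ℝ (fderiv ℝ ψ) (pvec n m κ)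
          (fun l : Fin m => ((l : ℕ) + 1 : ℝ) * ∑ p, κ p ^ (l : ℕ) * B p p)
          (fun l : Fin m => ((l : ℕ) + 1 : ℝ) * ∑ p, κ p ^ (l : ℕ) * B p p)
        + ∑ p, ∑ q, B p q * B q p * fderiv ℝ ψ (pvec n m κ) (pvecDivDiff m κ p q)) 0 := by
  have hu'' : (fun l : Fin m => ((l : ℕ) + 1 : ℝ) * ∑ i ∈ range l,
      ((diagonal κ + (0 : ℝ) • B) ^ i * B * (diagonal κ + (0 : ℝ) • B) ^ ((l : ℕ) - 1 - i)
        * B).trace) = ∑ p, ∑ q, (B p q * B q p) • pvecDivDiff m κ p q := by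
    ext l
    simp only [zero_smul, add_zero, trace_diagonal_pow_mul_diagonal_pow_mul, pvecDivDiff,
      Finset.sum_apply, Pi.smul_apply, smul_eq_mul, mul_sum]
    rw [sum_comm]
    refine sum_congr rfl fun p _ => ?_
    rw [sum_comm]
    exact sum_congr rfl fun q _ => sum_congr rfl fun i _ => by ring
  have h := hasDerivAt_deriv_comp hU hψ (hasDerivAt_Pvec_line m (diagonal κ) B)
    (hasDerivAt_Pvec_line_deriv m (diagonal κ) B 0) (by simpa [Pvec_diagonal] using hκ)
  rw [hu''] at h
  simpa [Pvec_diagonal, trace_diagonal_pow_mul, map_sum] using h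

theorem fderiv_apply_pvecDivDiff_nonpos
    (hΓsym : ∀ (π : Equiv.Perm (Fin n)), ∀ κ ∈ Γ, (fun i => κ (π i)) ∈ Γ)
    (hU : IsOpen U) (hψ : ContDiffOn ℝ 2 ψ U) (hΓU : ∀ κ ∈ Γ, pvec n m κ ∈ U)
    (hcon : ConcaveOn ℝ Γ fun x => ψ (pvec n m x)) {κ : Fin n → ℝ} (hκ : κ ∈ Γ) {p q : Fin n}
    (hpq : κ p ≠ κ q) : fderiv ℝ ψ (pvec n m κ) (pvecDivDiff m κ p q) ≤ 0 := by
  set d : Fin n → ℝ := Pi.single p 1 - Pi.single q 1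
  have hqp : q ≠ p := fun h => hpq (h ▸ rfl)
  have hswap : κ + (κ q - κ p) • d = fun i => κ (Equiv.swap p q i) := by
    ext r
    rcases eq_or_ne r p with rfl | hrp
    · simp [d, hqp.symm]
    rcases eq_or_ne r q with rfl | hrq
    · simp [d, hqp]
    · simp [d, hrp, hrq, Equiv.swap_apply_of_ne_of_ne]
  have hd : HasDerivAt (fun t : ℝ => ψ (pvec n m (κ + t • d)))
      ((κ p - κ q) * fderiv ℝ ψ (pvec n m κ) (pvecDivDiff m κ p q)) 0 := by
    simp_rw [pvec_add_smul]
    have h := ((hψ.differentiableOn two_ne_zero).differentiableAt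
      (hU.mem_nhds (hΓU κ hκ))).hasFDerivAt.comp_hasDerivAt_of_eq 0
      (hasDerivAt_Pvec_line m (diagonal κ) (diagonal d) 0) (by simp [Pvec_diagonal])
    refine h.congr_deriv ?_
    rw [← smul_eq_mul, ← map_smul, sub_smul_pvecDivDiff]
    congr 1
    ext l
    simp [trace_diagonal_pow_mul, d, Pi.single_apply, mul_sub]
  have h := (hcon.comp_line κ d).le_add_mul_of_hasDerivAt (y := κ q - κ p) (by simpa using hκ)
    (by simpa [hswap] using hΓsym _ κ hκ) hd
  simp only [hswap, pvec_comp_perm, zero_smul, add_zero, sub_zero] at h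
  nlinarith [sq_pos_of_ne_zero (sub_ne_zero.2 hpq)]

theorem deriv_deriv_comp_Pvec_diagonal_line_nonpos (hΓopen : IsOpen Γ)
    (hΓsym : ∀ (π : Equiv.Perm (Fin n)), ∀ κ ∈ Γ, (fun i => κ (π i)) ∈ Γ)
    (hU : IsOpen U) (hψ : ContDiffOn ℝ 2 ψ U) (hΓU : ∀ κ ∈ Γ, pvec n m κ ∈ U)
    (hcon : ConcaveOn ℝ Γ fun x => ψ (pvec n m x)) {κ : Fin n → ℝ} (hκ : κ ∈ Γ)
    (hκinj : Function.Injective κ) {B : Matrix (Fin n) (Fin n) ℝ} (hB : B.IsSymm) :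
    deriv (deriv fun t : ℝ => ψ (Pvec n m (diagonal κ + t • B))) 0 ≤ 0 := by
  set w : Fin n → ℝ := fun p => B p p
  have hdiff : ∀ t ∈ (fun t : ℝ => κ + t • w) ⁻¹' Γ,
      DifferentiableAt ℝ (fun t : ℝ => ψ (pvec n m (κ + t • w))) t := fun t ht => by
    have hψt := (hψ.differentiableOn two_ne_zero).differentiableAt (hU.mem_nhds (hΓU _ ht))
    rw [pvec_add_smul] at hψt
    simp_rw [pvec_add_smul]
    exact hψt.comp t (hasDerivAt_Pvec_line m _ _ t).differentiableAt
  have hdiag := hasDerivAt_deriv_comp_Pvec_diagonal_line m hU hψ (hΓU κ hκ) (diagonal w)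
  simp_rw [← pvec_add_smul] at hdiag
  have hdiag_nonpos := (hcon.comp_line κ w).nonpos_of_hasDerivAt_deriv
    (hΓopen.preimage (by fun_prop)) (by simpa using hκ) hdiff hdiag
  simp only [diagonal_apply_eq] at hdiag_nonpos
  rw [(hasDerivAt_deriv_comp_Pvec_diagonal_line m hU hψ (hΓU κ hκ) B).deriv]
  refine le_trans (add_le_add le_rfl (sum_le_sum fun p _ => sum_le_sum fun q _ => ?_))
    hdiag_nonpos
  rcases eq_or_ne p q with rfl | hpq
  · simp [w]
  · rw [diagonal_apply_ne _ hpq, zero_mul, zero_mul, hB.apply p q]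
    exact mul_nonpos_of_nonneg_of_nonpos (mul_self_nonneg _)
      (fderiv_apply_pvecDivDiff_nonpos m hΓsym hU hψ hΓU hcon hκ (hκinj.ne hpq))

end PowerSums

theorem stmt_14_general (n m : ℕ) (Γ : Set (Fin n → ℝ)) (hΓopen : IsOpen Γ)
    (hΓsym : ∀ (π : Equiv.Perm (Fin n)), ∀ κ ∈ Γ, (fun i => κ (π i)) ∈ Γ)
    (U : Set (Fin m → ℝ)) (hU : IsOpen U)
    (ψ : (Fin m → ℝ) → ℝ) (hψ : ContDiffOn ℝ 2 ψ U)
    (hΓU : ∀ κ ∈ Γ, pvec n m κ ∈ U)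
    (A : Matrix (Fin n) (Fin n) ℝ) (κ : Fin n → ℝ) (hκ : κ ∈ Γ)
    (hκdist : Function.Injective κ)
    (S : Matrix (Fin n) (Fin n) ℝ) (hS : IsUnit S)
    (hdiag : S⁻¹ * A * S = Matrix.diagonal κ)
    (η : Matrix (Fin n) (Fin n) ℝ) (hη : (S⁻¹ * η * S).IsSymm) :
    (ConcaveOn ℝ Γ (fun x : Fin n → ℝ => ψ (pvec n m x)) →
      fderiv ℝ (fderiv ℝ (fun X : Matrix (Fin n) (Fin n) ℝ => ψ (Pvec n m X))) A η η
        ≤ 0) ∧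
    (ConvexOn ℝ Γ (fun x : Fin n → ℝ => ψ (pvec n m x)) →
      0 ≤ fderiv ℝ (fderiv ℝ (fun X : Matrix (Fin n) (Fin n) ℝ => ψ (Pvec n m X))) A η η) := by
  have hPvec_line (t : ℝ) :
      Pvec n m (A + t • η) = Pvec n m (diagonal κ + t • (S⁻¹ * η * S)) := by
    rw [← Pvec_conj m hS, mul_add, add_mul, hdiag, mul_smul_comm, smul_mul_assoc]
  have hA : Pvec n m A ∈ U := by
    simpa [← Pvec_conj m hS A, hdiag, Pvec_diagonal] using hΓU κ hκ
  have hd2F : fderiv ℝ (fderiv ℝ fun X => ψ (Pvec n m X)) A η η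
      = deriv (deriv fun t : ℝ => ψ (Pvec n m (diagonal κ + t • (S⁻¹ * η * S)))) 0 := by
    have hP : ContDiff ℝ 2 (Pvec n m) := contDiff_Pvec m
    refine (fderiv_fderiv_apply_eq_deriv_deriv (hU.preimage hP.continuous)
      (hψ.comp hP.contDiffOn fun _ h => h) hA η).trans ?_
    simp_rw [Function.comp_apply, hPvec_line]
  refine ⟨fun hcon => hd2F ▸ deriv_deriv_comp_Pvec_diagonal_line_nonpos m hΓopen hΓsym hU hψ
    hΓU hcon hκ hκdist hη, fun hconv => ?_⟩
  have h := deriv_deriv_comp_Pvec_diagonal_line_nonpos m hΓopen hΓsym hU hψ.neg hΓU hconv.neg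
    hκ hκdist hη
  simpa [hd2F] using h

/-- Let `Γ ⊆ ℝⁿ` be open, convex, invariant under coordinate
permutations; `ψ` of class `C²` on the open `U ⊆ ℝ^m` with `(p₁(κ),…,p_m(κ)) ∈ U` for
all `κ ∈ Γ`; `F(A) = ψ(P₁(A),…,P_m(A))` and `f(κ) = ψ(p₁(κ),…,p_m(κ))`. Let
`S⁻¹ A S = diagonal κ` with `κ ∈ Γ` having pairwise distinct entries and let `η` be
such that `S⁻¹ η S` is symmetric. If `f` is concave on `Γ` then `d²F(A)(η,η) ≤ 0`; if
`f` is convex on `Γ` then `d²F(A)(η,η) ≥ 0`. -/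
theorem stmt_14 (n m : ℕ) (Γ : Set (Fin n → ℝ)) (hΓopen : IsOpen Γ)
    (hΓconv : Convex ℝ Γ)
    (hΓsym : ∀ (π : Equiv.Perm (Fin n)), ∀ κ ∈ Γ, (fun i => κ (π i)) ∈ Γ)
    (U : Set (Fin m → ℝ)) (hU : IsOpen U)
    (ψ : (Fin m → ℝ) → ℝ) (hψ : ContDiffOn ℝ 2 ψ U)
    (hΓU : ∀ κ ∈ Γ, pvec n m κ ∈ U)
    (A : Matrix (Fin n) (Fin n) ℝ) (κ : Fin n → ℝ) (hκ : κ ∈ Γ)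
    (hκdist : Function.Injective κ)
    (S : Matrix (Fin n) (Fin n) ℝ) (hS : IsUnit S)
    (hdiag : S⁻¹ * A * S = Matrix.diagonal κ)
    (η : Matrix (Fin n) (Fin n) ℝ) (hη : (S⁻¹ * η * S).IsSymm) :
    (ConcaveOn ℝ Γ (fun x : Fin n → ℝ => ψ (pvec n m x)) →
      fderiv ℝ (fderiv ℝ (fun X : Matrix (Fin n) (Fin n) ℝ => ψ (Pvec n m X))) A η η
        ≤ 0) ∧
    (ConvexOn ℝ Γ (fun x : Fin n → ℝ => ψ (pvec n m x)) →
      0 ≤ fderiv ℝ (fderiv ℝ (fun X : Matrix (Fin n) (Fin n) ℝ => ψ (Pvec n m X))) A η η) :=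
  stmt_14_general n m Γ hΓopen hΓsym U hU ψ hψ hΓU A κ hκ hκdist S hS hdiag η hη
end
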